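/- arXiv:0808.2368 — 6 statements merged into one kernel-verified Lean document; each statement's English description precedes it below -/
import Mathlib

section
/- Let L be a totally real number field of degree n over ℚ with real embeddings ι₁,...,ιₙ, viewed as embedding the ring of integers 𝒪_L into ℝⁿ via t ↦ (ι₁(t),...,ιₙ(t)). Then for any axis-parallel box B = {y ∈ ℝⁿ : |y_j - x_j| ≤ T_j for all j} with center x ∈ ℝⁿ and side half-lengths T_j > 0, the number of points of 𝒪_L lying in B is at most 1 + 2ⁿ T₁T₂⋯Tₙ, i.e. at most 1 + vol(B). -/
/-!
For distinct `t, s ∈ S`, `t - s` is a nonzero algebraic integer, so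
`|∏ j, ι j (t - s)| = |N(t - s)| ≥ 1`. All factors with `j ≠ j₀` are at most `2 T j`, so the
coordinates `ι j₀ t` are `(∏_{j ≠ j₀} 2 T j)⁻¹`-separated points of an interval of length
`2 T j₀`; there are at most `1 + 2 T j₀ ∏_{j ≠ j₀} 2 T j = 1 + 2 ^ n ∏ j, T j` of them.
-/

open Finset

theorem card_le_one_add_of_separated {α : Type*} (S : Finset α) (f : α → ℝ) {c r d : ℝ}
    (hr : 0 ≤ r) (hd : 0 < d) (hS : ∀ a ∈ S, |f a - c| ≤ r)
    (hsep : ∀ a ∈ S, ∀ b ∈ S, a ≠ b → d ≤ |f a - f b|) :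
    (S.card : ℝ) ≤ 1 + 2 * r / d := by
  set g : α → ℕ := fun a => ⌊(f a - (c - r)) / d⌋₊
  have hg_nonneg : ∀ a ∈ S, 0 ≤ (f a - (c - r)) / d := fun a ha =>
    div_nonneg (by linarith [(abs_le.mp (hS a ha)).1]) hd.le
  -- each cell `[c - r + k d, c - r + (k + 1) d)` contains at most one point
  have hg_inj : Set.InjOn g S := by
    intro a ha b hb hab
    by_contra hne
    have hfloor : ⌊(f a - (c - r)) / d⌋ = ⌊(f b - (c - r)) / d⌋ := by
      rw [← Int.natCast_floor_eq_floor (hg_nonneg a ha),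
        ← Int.natCast_floor_eq_floor (hg_nonneg b hb)]
      exact congrArg _ hab
    have hclose := Int.abs_sub_lt_one_of_floor_eq_floor hfloor
    rw [← sub_div, sub_sub_sub_cancel_right, abs_div, abs_of_pos hd, div_lt_one hd] at hclose
    exact (hsep a ha b hb hne).not_gt hclose
  have hg_range : ∀ a ∈ S, g a ∈ range (⌊2 * r / d⌋₊ + 1) := by
    intro a ha
    refine mem_range.mpr (Nat.lt_succ_of_le (Nat.floor_le_floor ?_))
    gcongr
    linarith [(abs_le.mp (hS a ha)).2]
  calc (S.card : ℝ) ≤ (⌊2 * r / d⌋₊ + 1 : ℕ) := by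
        exact_mod_cast (card_le_card_of_injOn g hg_range hg_inj).trans_eq (card_range _)
    _ ≤ 1 + 2 * r / d := by
        push_cast
        linarith [Nat.floor_le (div_nonneg (mul_nonneg zero_le_two hr) hd.le)]

theorem one_le_abs_norm_of_isIntegral {L : Type*} [Field L] [Algebra ℚ L] [FiniteDimensional ℚ L]
    {u : L} (hu : u ≠ 0) (hint : IsIntegral ℤ u) : 1 ≤ |Algebra.norm ℚ u| := by
  obtain ⟨m, hm⟩ := IsIntegrallyClosed.isIntegral_iff.mp (Algebra.isIntegral_norm ℚ hint)
  have hm0 : m ≠ 0 := by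
    rintro rfl
    exact (Algebra.norm_ne_zero_iff (R := ℚ).mpr hu) (by simpa using hm.symm)
  rw [← hm, algebraMap_int_eq, eq_intCast]
  exact_mod_cast Int.one_le_abs hm0

theorem ratCast_norm_eq_prod_of_injective {L : Type*} [Field L] [NumberField L] {n : ℕ}
    (hn : Module.finrank ℚ L = n) (ι : Fin n → (L →+* ℝ)) (hι : Function.Injective ι) (u : L) :
    ((Algebra.norm ℚ u : ℚ) : ℝ) = ∏ j, ι j u := by
  let e : Fin n → (L →ₐ[ℚ] ℂ) := fun j => (Complex.ofRealHom.comp (ι j)).toRatAlgHom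
  have he : Function.Bijective e := by
    refine (Fintype.bijective_iff_injective_and_card e).mpr ⟨fun a b hab => hι ?_, ?_⟩
    · ext z
      exact Complex.ofReal_injective (DFunLike.congr_fun hab z)
    · rw [Fintype.card_fin, AlgHom.card ℚ L ℂ, hn]
  apply Complex.ofReal_injective
  rw [Complex.ofReal_ratCast, ← eq_ratCast (algebraMap ℚ ℂ), Algebra.norm_eq_prod_embeddings ℚ ℂ u,
    Complex.ofReal_prod]
  exact (Fintype.prod_bijective e he _ _ fun j => rfl).symm

theorem inv_prod_erase_le_abs {ι : Type*} [Fintype ι] [DecidableEq ι] {y c : ι → ℝ} {i : ι}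
    (hy : 1 ≤ |∏ j, y j|) (hc : ∀ j ∈ univ.erase i, |y j| ≤ c j) :
    (∏ j ∈ univ.erase i, c j)⁻¹ ≤ |y i| := by
  have hc0 : 0 ≤ ∏ j ∈ univ.erase i, c j := prod_nonneg fun j hj => (abs_nonneg _).trans (hc j hj)
  have key : 1 ≤ |y i| * ∏ j ∈ univ.erase i, c j :=
    calc 1 ≤ |∏ j, y j| := hy
      _ = |y i| * ∏ j ∈ univ.erase i, |y j| := by
        rw [abs_prod, mul_prod_erase univ (fun j => |y j|) (mem_univ i)]
      _ ≤ |y i| * ∏ j ∈ univ.erase i, c j := by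
        gcongr with j hj
        exact hc j hj
  rcases hc0.eq_or_lt with h | h
  · rw [← h, inv_zero]
    exact abs_nonneg _
  · exact (inv_le_iff_one_le_mul₀ h).mpr key

/-- Let `L` be a totally real number field of degree `n` with real embeddings
`ι 0, …, ι (n-1)` (an injective family of `n` real embeddings of a degree-`n` field, i.e. all of
them).  Then the number of points of `𝒪_L`, embedded in `ℝⁿ` via `t ↦ (ι j t)_j`, lying in the
axis-parallel box `{y : |y j - x j| ≤ T j}` is at most `1 + 2 ^ n * ∏ j, T j = 1 + vol(B)`. -/
theorem stmt_0 {L : Type*} [Field L] [NumberField L] (n : ℕ)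
    (hn : Module.finrank ℚ L = n)
    (ι : Fin n → (L →+* ℝ)) (hι : Function.Injective ι)
    (x T : Fin n → ℝ) (hT : ∀ j, 0 < T j)
    (S : Finset L)
    (hSint : ∀ t ∈ S, IsIntegral ℤ t)
    (hSbox : ∀ t ∈ S, ∀ j, |ι j t - x j| ≤ T j) :
    (S.card : ℝ) ≤ 1 + 2 ^ n * ∏ j, T j := by
  classical
  let j₀ : Fin n := ⟨0, hn ▸ Module.finrank_pos⟩
  let P := ∏ j ∈ univ.erase j₀, 2 * T j
  have hsep : ∀ t ∈ S, ∀ s ∈ S, t ≠ s → P⁻¹ ≤ |ι j₀ t - ι j₀ s| := by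
    intro t ht s hs hts
    have hnorm : 1 ≤ |∏ j, ι j (t - s)| := by
      rw [← ratCast_norm_eq_prod_of_injective hn ι hι, ← Rat.cast_abs]
      exact_mod_cast one_le_abs_norm_of_isIntegral (sub_ne_zero.mpr hts)
        ((hSint t ht).sub (hSint s hs))
    rw [← map_sub]
    refine inv_prod_erase_le_abs hnorm fun j _ => ?_
    rw [map_sub]
    refine (abs_sub_le _ (x j) _).trans ?_
    rw [abs_sub_comm (x j)]
    linarith [hSbox t ht j, hSbox s hs j]
  calc (S.card : ℝ) ≤ 1 + 2 * T j₀ / P⁻¹ :=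
        card_le_one_add_of_separated S (ι j₀) (hT j₀).le
          (inv_pos.mpr (prod_pos fun j _ => by linarith [hT j])) (fun t ht => hSbox t ht j₀) hsep
    _ = 1 + 2 ^ n * ∏ j, T j := by
        rw [div_inv_eq_mul, mul_prod_erase univ (fun j => 2 * T j) (mem_univ j₀), prod_mul_distrib,
          prod_const, card_univ, Fintype.card_fin]
end

section
/- Let K = L(√D) be a quadratic extension of a number field L and 𝒪 ⊆ 𝒪_K an order containing 𝒪_L. With 𝔤 = {u ∈ L : ∃ t ∈ 𝒪_L, (t + u√D)/2 ∈ 𝒪}, one has 𝒪 = {(t + u√D)/2 ∈ 𝒪_K : u ∈ 𝔤}. That is, an element (t+u√D)/2 of 𝒪_K lies in 𝒪 if and only if u ∈ 𝔤. -/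
/-!
Write `β = a + b√D` with `a, b ∈ L`. If `β ∈ 𝒪`, its trace `2a` is integral, so
`β = (2a + 2b√D)/2` exhibits `2b ∈ 𝔤`. Conversely, if `(t' + u√D)/2 ∈ 𝒪` with `t' ∈ 𝒪_L` and
`β = (t + u√D)/2` is integral, then the difference of the two is `(t - t')/2 ∈ L`, integral as a
difference of integral elements, hence in `𝒪_L ⊆ 𝒪`.
-/

open NumberField

/-- The set `𝔤 = {u ∈ L : ∃ t ∈ 𝒪_L, (t + u√D)/2 ∈ 𝒪}`. -/
def gSet (L : Type*) {K : Type*} [Field L] [Field K] [Algebra L K]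
    (sqrtD : K) (O : Subring K) : Set L :=
  {u : L | ∃ t : L, IsIntegral ℤ t ∧
    (algebraMap L K t + algebraMap L K u * sqrtD) / 2 ∈ O}

open Module

section QuadraticExtension

variable {L K : Type*} [Field L] [Field K] [Algebra L K] {s : K}

theorem linearIndependent_gen_one (hs : s ∉ Set.range (algebraMap L K)) :
    LinearIndependent L ![s, 1] :=
  linearIndependent_fin2.2
    ⟨by simp, fun a h => hs ⟨a, by simpa [Algebra.algebraMap_eq_smul_one] using h⟩⟩

noncomputable def basisGenOne (hdeg : finrank L K = 2) (hs : s ∉ Set.range (algebraMap L K)) :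
    Basis (Fin 2) L K :=
  basisOfLinearIndependentOfCardEqFinrank (linearIndependent_gen_one hs) (by simp [hdeg])

@[simp]
theorem basisGenOne_zero (hdeg : finrank L K = 2) (hs : s ∉ Set.range (algebraMap L K)) :
    basisGenOne hdeg hs 0 = s := by
  simp [basisGenOne]

@[simp]
theorem basisGenOne_one (hdeg : finrank L K = 2) (hs : s ∉ Set.range (algebraMap L K)) :
    basisGenOne hdeg hs 1 = 1 := by
  simp [basisGenOne]

theorem exists_eq_algebraMap_add_algebraMap_mul (hdeg : finrank L K = 2)
    (hs : s ∉ Set.range (algebraMap L K)) (β : K) :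
    ∃ a b : L, β = algebraMap L K a + algebraMap L K b * s := by
  set B := basisGenOne hdeg hs
  refine ⟨B.repr β 1, B.repr β 0, ?_⟩
  conv_lhs => rw [← B.sum_repr β]
  simp [B, Fin.sum_univ_two, Algebra.smul_def, add_comm]

theorem trace_eq_zero_of_sq_eq_algebraMap (hdeg : finrank L K = 2)
    (hs : s ∉ Set.range (algebraMap L K)) {D : L} (hsq : s ^ 2 = algebraMap L K D) :
    Algebra.trace L K s = 0 := by
  set B := basisGenOne hdeg hs
  have : Module.Finite L K := .of_basis B
  have h0 : s * B 0 = D • B 1 := by simp [B, ← sq, hsq, Algebra.algebraMap_eq_smul_one]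
  have h1 : s * B 1 = B 0 := by simp [B]
  rw [Algebra.trace_eq_matrix_trace B, Matrix.trace, Fin.sum_univ_two]
  simp [Algebra.leftMulMatrix_eq_repr_mul, h0, h1]

theorem trace_algebraMap_add_algebraMap_mul (hdeg : finrank L K = 2)
    (hs : s ∉ Set.range (algebraMap L K)) {D : L} (hsq : s ^ 2 = algebraMap L K D) (a b : L) :
    Algebra.trace L K (algebraMap L K a + algebraMap L K b * s) = 2 * a := by
  rw [map_add, Algebra.trace_algebraMap, hdeg, ← Algebra.smul_def, map_smul,
    trace_eq_zero_of_sq_eq_algebraMap hdeg hs hsq]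
  simp [two_mul]

theorem isIntegral_two_mul_of_isIntegral (hdeg : finrank L K = 2)
    (hs : s ∉ Set.range (algebraMap L K)) {D : L} (hsq : s ^ 2 = algebraMap L K D) {a b : L}
    (h : IsIntegral ℤ (algebraMap L K a + algebraMap L K b * s)) : IsIntegral ℤ (2 * a) := by
  have : Module.Finite L K := .of_basis (basisGenOne hdeg hs)
  simpa [trace_algebraMap_add_algebraMap_mul hdeg hs hsq] using
    Algebra.isIntegral_trace (R := ℤ) (L := L) h

end QuadraticExtension

theorem Subring.mem_of_isIntegral_of_sub_mem_range {L K : Type*} [Field L] [Field K]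
    [Algebra L K] (O : Subring K) (hOL : ∀ x : L, IsIntegral ℤ x → algebraMap L K x ∈ O)
    {β γ : K} (hβ : IsIntegral ℤ β) (hγ : γ ∈ O) (hγint : IsIntegral ℤ γ)
    (hsub : β - γ ∈ Set.range (algebraMap L K)) : β ∈ O := by
  obtain ⟨c, hc⟩ := hsub
  have hcint : IsIntegral ℤ c := by
    rw [← isIntegral_algebraMap_iff (algebraMap L K).injective, hc]
    exact hβ.sub hγint
  simpa [hc] using O.add_mem hγ (hOL c hcint)

theorem stmt_3_general {L K : Type*} [Field L] [NumberField L] [Field K]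
    [Algebra L K] (hdeg : Module.finrank L K = 2)
    (D : L)
    (sqrtD : K) (hsq : sqrtD ^ 2 = algebraMap L K D)
    (hsqnot : sqrtD ∉ Set.range (algebraMap L K))
    (O : Subring K)
    (hOint : ∀ x ∈ O, IsIntegral ℤ x)
    (hOL : ∀ x : L, IsIntegral ℤ x → algebraMap L K x ∈ O) :
    (O : Set K) = {β : K | ∃ t u : L, u ∈ gSet L sqrtD O ∧ IsIntegral ℤ β ∧
      β = (algebraMap L K t + algebraMap L K u * sqrtD) / 2} := by
  have : CharZero K := charZero_of_injective_algebraMap (algebraMap L K).injective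
  have halve : ∀ a b : L, (algebraMap L K (2 * a) + algebraMap L K (2 * b) * sqrtD) / 2 =
      algebraMap L K a + algebraMap L K b * sqrtD := fun a b => by
    simp only [map_mul, map_ofNat]
    field_simp
  ext β
  constructor
  · intro hβ
    obtain ⟨a, b, rfl⟩ := exists_eq_algebraMap_add_algebraMap_mul hdeg hsqnot β
    have hβint := hOint _ hβ
    exact ⟨2 * a, 2 * b,
      ⟨2 * a, isIntegral_two_mul_of_isIntegral hdeg hsqnot hsq hβint, (halve a b).symm ▸ hβ⟩,
      hβint, (halve a b).symm⟩
  · rintro ⟨t, u, ⟨t', ht', hγ⟩, hβ, rfl⟩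
    refine O.mem_of_isIntegral_of_sub_mem_range hOL hβ hγ (hOint _ hγ) ⟨(t - t') / 2, ?_⟩
    simp only [map_div₀, map_sub, map_ofNat]
    ring

/-- Let `K = L(√D)` be a quadratic extension of the number field `L` and
`𝒪 ⊆ 𝒪_K` an order containing `𝒪_L`.  With `𝔤 = {u ∈ L : ∃ t ∈ 𝒪_L, (t + u√D)/2 ∈ 𝒪}`, one
has `𝒪 = {(t + u√D)/2 ∈ 𝒪_K : u ∈ 𝔤}`: an element `(t + u√D)/2` of `𝒪_K` lies in `𝒪` if and
only if `u ∈ 𝔤`. -/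
theorem stmt_3 {L K : Type*} [Field L] [NumberField L] [Field K] [NumberField K]
    [Algebra L K] (hdeg : Module.finrank L K = 2)
    (D : L) (hDint : IsIntegral ℤ D) (hDns : ∀ x : L, x ^ 2 ≠ D)
    (sqrtD : K) (hsq : sqrtD ^ 2 = algebraMap L K D)
    (hsqnot : sqrtD ∉ Set.range (algebraMap L K))
    (O : Subring K)
    (hOint : ∀ x ∈ O, IsIntegral ℤ x)
    (hOL : ∀ x : L, IsIntegral ℤ x → algebraMap L K x ∈ O)
    (hOfull : ∃ β ∈ O, β ∉ Set.range (algebraMap L K)) :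
    (O : Set K) = {β : K | ∃ t u : L, u ∈ gSet L sqrtD O ∧ IsIntegral ℤ β ∧
      β = (algebraMap L K t + algebraMap L K u * sqrtD) / 2} :=
  stmt_3_general hdeg D sqrtD hsq hsqnot O hOint hOL
end

section
/- Let K = L(√D) be a quadratic extension of a number field L and 𝒪 ⊆ 𝒪_K an order containing 𝒪_L, with 𝔤 = {u ∈ L : ∃ t ∈ 𝒪_L, (t + u√D)/2 ∈ 𝒪}. Then the relative discriminant ideal d(𝒪/𝒪_L) of 𝒪 over 𝒪_L equals 𝔤²·(D). -/
/-!
Write `x = a + b√D` with `a, b ∈ L`. Since `Tr(x) = 2a`, the discriminant of `(x₁, x₂)` is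
`(2(a₁b₂ - b₁a₂))² D`, and `2(a₁b₂ - b₁a₂)` is twice the `√D`-coordinate of `x̄₁x₂ ∈ 𝒪`, where
`x̄₁ = Tr(x₁) - x₁`; so it lies in `𝔤`. Conversely, if `(t + w√D)/2 ∈ 𝒪` then `(1, (t + w√D)/2)`
has discriminant `w² D`. The mixed products `u v D` are then reached because in a Dedekind domain
the squares of the elements of a fractional ideal generate its square: if `I² = J C` with `J` the
ideal generated by squares and `C ⊆ P` maximal, then every `x ∈ I` has `x² ∈ I² P`, forcing
`x ∈ I P`, i.e. `I = I P`.
-/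

open NumberField

open Module

theorem Ideal.mem_mul_of_sq_mem_sq_mul {R : Type*} [CommRing R] [IsDedekindDomain R]
    {I P : Ideal R} [P.IsPrime] (hI : I ≠ ⊥) {x : R} (hx : x ∈ I)
    (hx2 : x ^ 2 ∈ I ^ 2 * P) : x ∈ I * P := by
  obtain ⟨B, hB⟩ := Ideal.dvd_iff_le.mpr ((Ideal.span_singleton_le_iff_mem I).mpr hx)
  have hdvd : I ^ 2 * P ∣ I ^ 2 * B ^ 2 := by
    rw [← mul_pow, ← hB, Ideal.span_singleton_pow, Ideal.dvd_iff_le,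
      Ideal.span_singleton_le_iff_mem]
    exact hx2
  have hBP : B ≤ P := Ideal.IsPrime.le_of_pow_le <|
    Ideal.le_of_dvd ((mul_dvd_mul_iff_left (pow_ne_zero 2 hI)).mp hdvd)
  exact Ideal.mul_mono_right hBP (hB ▸ Ideal.mem_span_singleton_self x)

theorem Ideal.span_sq_eq_sq {R : Type*} [CommRing R] [IsDedekindDomain R] (I : Ideal R) :
    Ideal.span ((· ^ 2) '' (I : Set R)) = I ^ 2 := by
  set J := Ideal.span ((· ^ 2) '' (I : Set R))
  have hJ : J ≤ I ^ 2 := Ideal.span_le.mpr <| by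
    rintro _ ⟨c, hc, rfl⟩
    exact Ideal.pow_mem_pow hc 2
  rcases eq_or_ne I ⊥ with rfl | hI
  · exact le_antisymm hJ (by simp)
  obtain ⟨C, hC⟩ := Ideal.dvd_iff_le.mpr hJ
  suffices C = ⊤ by rw [hC, this, Ideal.mul_top]
  by_contra hC_top
  obtain ⟨P, hP, hCP⟩ := Ideal.exists_le_maximal C hC_top
  have hJP : J ≤ I ^ 2 * P := hC ▸ Ideal.mul_mono_right hCP
  have hIP : I ≤ I * P := fun x hx =>
    Ideal.mem_mul_of_sq_mem_sq_mul hI hx (hJP (Ideal.subset_span ⟨x, hx, rfl⟩))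
  have : I * P = I * ⊤ := by rw [Ideal.mul_top]; exact le_antisymm Ideal.mul_le_left hIP
  exact hP.ne_top (mul_left_cancel₀ hI this)

theorem Submodule.mul_mem_span_sq {R K : Type*} [CommRing R] [IsDedekindDomain R] [Field K]
    [Algebra R K] [IsFractionRing R K] (M : Submodule R K) {a b : K} (ha : a ∈ M) (hb : b ∈ M) :
    a * b ∈ Submodule.span R ((· ^ 2) '' (M : Set K)) := by
  -- with a common denominator `d`, `I = {r | r / d ∈ M}` is an ideal to which
  -- `Ideal.span_sq_eq_sq` applies
  obtain ⟨⟨a', d₁⟩, ha'⟩ := IsLocalization.surj (nonZeroDivisors R) a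
  obtain ⟨⟨b', d₂⟩, hb'⟩ := IsLocalization.surj (nonZeroDivisors R) b
  set d : K := algebraMap R K (d₁ * d₂ : R)
  have hd : d ≠ 0 := IsFractionRing.to_map_ne_zero_of_mem_nonZeroDivisors (d₁ * d₂).2
  let divide (n : ℕ) : R →ₗ[R] K := LinearMap.mulLeft R (d ^ n)⁻¹ ∘ₗ Algebra.linearMap R K
  have divide_apply (n : ℕ) (r : R) : divide n r = (d ^ n)⁻¹ * algebraMap R K r := rfl
  set I : Ideal R := M.comap (divide 1)
  have mem_I {r : R} {x : K} (hx : x ∈ M) (hr : algebraMap R K r = d * x) : r ∈ I := by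
    simp only [I, Submodule.mem_comap, divide_apply, hr, pow_one, inv_mul_cancel_left₀ hd, hx]
  have hr₁ : algebraMap R K (a' * d₂) = d * a := by simp only [d, map_mul, ← ha']; ring
  have hr₂ : algebraMap R K (b' * d₁) = d * b := by simp only [d, map_mul, ← hb']; ring
  have hprod : a' * d₂ * (b' * d₁) ∈ Ideal.span ((· ^ 2) '' (I : Set R)) := by
    rw [Ideal.span_sq_eq_sq, sq]
    exact Ideal.mul_mem_mul (mem_I ha hr₁) (mem_I hb hr₂)
  have hab : divide 2 (a' * d₂ * (b' * d₁)) = a * b := by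
    rw [divide_apply, map_mul, hr₁, hr₂]
    field_simp
  have hmap := Submodule.mem_map_of_mem (f := divide 2) hprod
  rw [Submodule.map_span, hab] at hmap
  refine Submodule.span_mono ?_ hmap
  rintro _ ⟨_, ⟨c, hc, rfl⟩, rfl⟩
  exact ⟨divide 1 c, hc, by simp only [divide_apply, map_pow]; ring⟩

theorem linearIndependent_one_of_notMem_range {L K : Type*} [Field L] [Field K] [Algebra L K]
    {x : K} (hx : x ∉ Set.range (algebraMap L K)) : LinearIndependent L ![(1 : K), x] := by
  rw [LinearIndependent.pair_iff]
  intro s t hst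
  obtain rfl : t = 0 := by
    by_contra ht
    refine hx ⟨-s / t, ?_⟩
    rw [Algebra.smul_def, Algebra.smul_def, mul_one] at hst
    rw [map_div₀, map_neg, div_eq_iff (by simpa using ht)]
    linear_combination -hst
  simpa using hst

theorem Algebra.discr_fin_two {L K : Type*} [CommRing L] [CommRing K] [Algebra L K] (x y : K) :
    Algebra.discr L ![x, y] = Matrix.det !![Algebra.trace L K (x * x), Algebra.trace L K (x * y);
      Algebra.trace L K (y * x), Algebra.trace L K (y * y)] := by
  rw [Algebra.discr_def]
  congr 1
  ext i j
  fin_cases i <;> fin_cases j <;> rfl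

section QuadraticExtension

variable {L K : Type*} [Field L] [Field K] [Algebra L K] {D : L} {sqrtD : K}

theorem exists_eq_add_mul_sqrt (hdeg : finrank L K = 2)
    (hsqnot : sqrtD ∉ Set.range (algebraMap L K)) (x : K) :
    ∃ a b : L, x = algebraMap L K a + algebraMap L K b * sqrtD := by
  have hspan := (linearIndependent_one_of_notMem_range hsqnot).span_eq_top_of_card_eq_finrank
    (by simp [hdeg])
  have hx : x ∈ Submodule.span L {1, sqrtD} := by
    rw [← Matrix.range_cons_cons_empty 1 sqrtD ![], hspan]
    exact Submodule.mem_top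
  obtain ⟨a, b, rfl⟩ := Submodule.mem_span_pair.mp hx
  exact ⟨a, b, by rw [Algebra.smul_def, Algebra.smul_def, mul_one]⟩

theorem trace_sqrt_eq_zero (hdeg : finrank L K = 2) (hsq : sqrtD ^ 2 = algebraMap L K D)
    (hsqnot : sqrtD ∉ Set.range (algebraMap L K)) : Algebra.trace L K sqrtD = 0 := by
  let B := basisOfLinearIndependentOfCardEqFinrank (linearIndependent_one_of_notMem_range hsqnot)
    (by simp [hdeg])
  have hB0 : B 0 = 1 := by simp [B]
  have hB1 : B 1 = sqrtD := by simp [B]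
  have hD : sqrtD * sqrtD = D • B 0 := by rw [← sq, hsq, hB0, Algebra.algebraMap_eq_smul_one]
  rw [Algebra.trace_eq_matrix_trace B, Matrix.trace_fin_two, Algebra.leftMulMatrix_eq_repr_mul,
    Algebra.leftMulMatrix_eq_repr_mul, hB0, mul_one, hB1, hD, ← hB1, map_smul, B.repr_self,
    B.repr_self]
  simp

theorem trace_add_mul_sqrt (hdeg : finrank L K = 2) (hsq : sqrtD ^ 2 = algebraMap L K D)
    (hsqnot : sqrtD ∉ Set.range (algebraMap L K)) (a b : L) :
    Algebra.trace L K (algebraMap L K a + algebraMap L K b * sqrtD) = 2 * a := by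
  rw [map_add, ← Algebra.smul_def, map_smul, trace_sqrt_eq_zero hdeg hsq hsqnot,
    Algebra.trace_algebraMap, hdeg, smul_zero, add_zero, nsmul_eq_mul, Nat.cast_ofNat]

theorem add_mul_sqrt_mul_add_mul_sqrt (hsq : sqrtD ^ 2 = algebraMap L K D) (a₁ b₁ a₂ b₂ : L) :
    (algebraMap L K a₁ + algebraMap L K b₁ * sqrtD) *
        (algebraMap L K a₂ + algebraMap L K b₂ * sqrtD) =
      algebraMap L K (a₁ * a₂ + b₁ * b₂ * D) + algebraMap L K (a₁ * b₂ + b₁ * a₂) * sqrtD := by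
  simp only [map_add, map_mul, ← hsq]
  ring

theorem discr_add_mul_sqrt (hdeg : finrank L K = 2) (hsq : sqrtD ^ 2 = algebraMap L K D)
    (hsqnot : sqrtD ∉ Set.range (algebraMap L K)) (a₁ b₁ a₂ b₂ : L) :
    Algebra.discr L ![algebraMap L K a₁ + algebraMap L K b₁ * sqrtD,
      algebraMap L K a₂ + algebraMap L K b₂ * sqrtD] = (2 * (a₁ * b₂ - b₁ * a₂)) ^ 2 * D := by
  simp only [Algebra.discr_fin_two, Matrix.det_fin_two_of, add_mul_sqrt_mul_add_mul_sqrt hsq,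
    trace_add_mul_sqrt hdeg hsq hsqnot]
  ring

theorem add_mul_sqrt_notMem_range (hsqnot : sqrtD ∉ Set.range (algebraMap L K)) (a : L) {b : L}
    (hb : b ≠ 0) : algebraMap L K a + algebraMap L K b * sqrtD ∉ Set.range (algebraMap L K) := by
  rintro ⟨c, hc⟩
  refine hsqnot ⟨(c - a) / b, ?_⟩
  rw [map_div₀, map_sub, hc, div_eq_iff (by simpa using hb)]
  ring

variable {O : Subring K}

theorem isIntegral_two_mul_of_add_mul_sqrt_mem (hdeg : finrank L K = 2)
    (hsq : sqrtD ^ 2 = algebraMap L K D) (hsqnot : sqrtD ∉ Set.range (algebraMap L K))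
    (hOint : ∀ x ∈ O, IsIntegral ℤ x) {a b : L}
    (hx : algebraMap L K a + algebraMap L K b * sqrtD ∈ O) : IsIntegral ℤ (2 * a) := by
  have : FiniteDimensional L K := Module.finite_of_finrank_eq_succ hdeg
  simpa only [trace_add_mul_sqrt hdeg hsq hsqnot] using
    Algebra.isIntegral_trace (L := L) (hOint _ hx)

theorem two_mul_mem_gSet_of_add_mul_sqrt_mem [CharZero L] (hdeg : finrank L K = 2)
    (hsq : sqrtD ^ 2 = algebraMap L K D) (hsqnot : sqrtD ∉ Set.range (algebraMap L K))
    (hOint : ∀ x ∈ O, IsIntegral ℤ x) {a b : L}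
    (hx : algebraMap L K a + algebraMap L K b * sqrtD ∈ O) : 2 * b ∈ gSet L sqrtD O := by
  have : CharZero K := charZero_of_injective_algebraMap (algebraMap L K).injective
  refine ⟨2 * a, isIntegral_two_mul_of_add_mul_sqrt_mem hdeg hsq hsqnot hOint hx, ?_⟩
  convert hx using 1
  simp only [map_mul, map_ofNat]
  field_simp

theorem exists_mem_gSet_discr_eq [CharZero L] (hdeg : finrank L K = 2)
    (hsq : sqrtD ^ 2 = algebraMap L K D) (hsqnot : sqrtD ∉ Set.range (algebraMap L K))
    (hOint : ∀ x ∈ O, IsIntegral ℤ x) (hOL : ∀ x : L, IsIntegral ℤ x → algebraMap L K x ∈ O)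
    {x₁ x₂ : K} (hx₁ : x₁ ∈ O) (hx₂ : x₂ ∈ O) :
    ∃ w ∈ gSet L sqrtD O, Algebra.discr L ![x₁, x₂] = w ^ 2 * D := by
  obtain ⟨a₁, b₁, rfl⟩ := exists_eq_add_mul_sqrt hdeg hsqnot x₁
  obtain ⟨a₂, b₂, rfl⟩ := exists_eq_add_mul_sqrt hdeg hsqnot x₂
  -- the conjugate of `x₁` is `2 a₁ - x₁`
  have hconj : (algebraMap L K (2 * a₁) - (algebraMap L K a₁ + algebraMap L K b₁ * sqrtD)) *
      (algebraMap L K a₂ + algebraMap L K b₂ * sqrtD) =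
      algebraMap L K (a₁ * a₂ - b₁ * b₂ * D) + algebraMap L K (a₁ * b₂ - b₁ * a₂) * sqrtD := by
    simp only [map_sub, map_mul, map_ofNat, ← hsq]
    ring
  have hmem := O.mul_mem (O.sub_mem (hOL _
    (isIntegral_two_mul_of_add_mul_sqrt_mem hdeg hsq hsqnot hOint hx₁)) hx₁) hx₂
  rw [hconj] at hmem
  exact ⟨_, two_mul_mem_gSet_of_add_mul_sqrt_mem hdeg hsq hsqnot hOint hmem,
    discr_add_mul_sqrt hdeg hsq hsqnot _ _ _ _⟩

theorem sq_mul_mem_span_discr [CharZero L] (hdeg : finrank L K = 2)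
    (hsq : sqrtD ^ 2 = algebraMap L K D) (hsqnot : sqrtD ∉ Set.range (algebraMap L K))
    {w : L} (hw : w ∈ gSet L sqrtD O) :
    w ^ 2 * D ∈ Submodule.span (𝓞 L) {a : L | ∃ x₁ x₂ : K, x₁ ∈ O ∧ x₂ ∈ O ∧
      LinearIndependent L ![x₁, x₂] ∧ a = Algebra.discr L ![x₁, x₂]} := by
  rcases eq_or_ne w 0 with rfl | hw0
  · simp
  obtain ⟨t, -, ht⟩ := hw
  have hx : (algebraMap L K t + algebraMap L K w * sqrtD) / 2 =
      algebraMap L K (t / 2) + algebraMap L K (w / 2) * sqrtD := by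
    simp only [map_div₀, map_ofNat]
    ring
  have hone : (1 : K) = algebraMap L K 1 + algebraMap L K 0 * sqrtD := by simp
  refine Submodule.subset_span ⟨1, _, O.one_mem, ht, ?_, ?_⟩
  · rw [hx]
    exact linearIndependent_one_of_notMem_range <|
      add_mul_sqrt_notMem_range hsqnot _ (div_ne_zero hw0 two_ne_zero)
  · rw [hx, hone, discr_add_mul_sqrt hdeg hsq hsqnot]
    field_simp
    ring

end QuadraticExtension

def gSubmodule {L K : Type*} [Field L] [Field K] [Algebra L K] (sqrtD : K) (O : Subring K)
    (hOL : ∀ x : L, IsIntegral ℤ x → algebraMap L K x ∈ O) : Submodule (𝓞 L) L where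
  carrier := gSet L sqrtD O
  add_mem' := by
    rintro u v ⟨t, ht, hu⟩ ⟨s, hs, hv⟩
    refine ⟨t + s, ht.add hs, ?_⟩
    convert O.add_mem hu hv using 1
    simp only [map_add]
    ring
  zero_mem' := ⟨0, isIntegral_zero, by simp⟩
  smul_mem' := by
    rintro z u ⟨t, ht, hu⟩
    refine ⟨z * t, z.isIntegral_coe.mul ht, ?_⟩
    convert O.mul_mem (hOL z z.isIntegral_coe) hu using 1
    rw [Algebra.smul_def]
    simp only [map_mul]
    ring

theorem stmt_4_general {L K : Type*} [Field L] [NumberField L] [Field K]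
    [Algebra L K] (hdeg : Module.finrank L K = 2)
    (D : L)
    (sqrtD : K) (hsq : sqrtD ^ 2 = algebraMap L K D)
    (hsqnot : sqrtD ∉ Set.range (algebraMap L K))
    (O : Subring K)
    (hOint : ∀ x ∈ O, IsIntegral ℤ x)
    (hOL : ∀ x : L, IsIntegral ℤ x → algebraMap L K x ∈ O) :
    Submodule.span (𝓞 L) {a : L | ∃ x₁ x₂ : K, x₁ ∈ O ∧ x₂ ∈ O ∧
        LinearIndependent L ![x₁, x₂] ∧
        a = Matrix.det !![Algebra.trace L K (x₁ * x₁), Algebra.trace L K (x₁ * x₂);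
          Algebra.trace L K (x₂ * x₁), Algebra.trace L K (x₂ * x₂)]}
      = Submodule.span (𝓞 L) {a : L | ∃ u ∈ gSet L sqrtD O, ∃ v ∈ gSet L sqrtD O,
          a = u * v * D} := by
  simp only [← Algebra.discr_fin_two]
  apply le_antisymm
  · refine Submodule.span_mono ?_
    rintro _ ⟨x₁, x₂, hx₁, hx₂, -, rfl⟩
    obtain ⟨w, hw, hdiscr⟩ := exists_mem_gSet_discr_eq hdeg hsq hsqnot hOint hOL hx₁ hx₂
    exact ⟨w, hw, w, hw, by rw [hdiscr]; ring⟩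
  · rw [Submodule.span_le]
    rintro _ ⟨u, hu, v, hv, rfl⟩
    have huv := (gSubmodule sqrtD O hOL).mul_mem_span_sq (R := 𝓞 L) hu hv
    have hmap := Submodule.mem_map_of_mem (f := LinearMap.mulRight (𝓞 L) D) huv
    rw [Submodule.map_span] at hmap
    refine Submodule.span_le.mpr ?_ hmap
    rintro _ ⟨_, ⟨w, hw, rfl⟩, rfl⟩
    exact sq_mul_mem_span_discr hdeg hsq hsqnot hw

/-- Let `K = L(√D)` be a quadratic extension of the number field `L` and
`𝒪 ⊆ 𝒪_K` an order containing `𝒪_L`, with `𝔤` as above.  Then the relative discriminant ideal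
`d(𝒪/𝒪_L)` — the `𝒪_L`-ideal generated by the discriminants `det (Tr_{K/L}(xᵢxⱼ))` of all
`L`-bases `(x₁, x₂)` of `K` lying in `𝒪` — equals the ideal `𝔤²·(D)`, generated by
`{u·v·D : u, v ∈ 𝔤}`. -/
theorem stmt_4 {L K : Type*} [Field L] [NumberField L] [Field K] [NumberField K]
    [Algebra L K] (hdeg : Module.finrank L K = 2)
    (D : L) (hDint : IsIntegral ℤ D) (hDns : ∀ x : L, x ^ 2 ≠ D)
    (sqrtD : K) (hsq : sqrtD ^ 2 = algebraMap L K D)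
    (hsqnot : sqrtD ∉ Set.range (algebraMap L K))
    (O : Subring K)
    (hOint : ∀ x ∈ O, IsIntegral ℤ x)
    (hOL : ∀ x : L, IsIntegral ℤ x → algebraMap L K x ∈ O)
    (hOfull : ∃ β ∈ O, β ∉ Set.range (algebraMap L K)) :
    Submodule.span (𝓞 L) {a : L | ∃ x₁ x₂ : K, x₁ ∈ O ∧ x₂ ∈ O ∧
        LinearIndependent L ![x₁, x₂] ∧
        a = Matrix.det !![Algebra.trace L K (x₁ * x₁), Algebra.trace L K (x₁ * x₂);
          Algebra.trace L K (x₂ * x₁), Algebra.trace L K (x₂ * x₂)]}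
      = Submodule.span (𝓞 L) {a : L | ∃ u ∈ gSet L sqrtD O, ∃ v ∈ gSet L sqrtD O,
          a = u * v * D} :=
  stmt_4_general hdeg D sqrtD hsq hsqnot O hOint hOL
end

section
/- Let K/L be a quadratic extension of number fields and 𝒪 ⊆ 𝒪_K an order containing 𝒪_L with conductor 𝔣 = {x ∈ 𝒪_K : x𝒪_K ⊆ 𝒪} and 𝔣₀ = 𝔣 ∩ 𝒪_L. Then the relative discriminants satisfy d(𝒪/𝒪_L) = 𝔣₀² · D_{K/L}, where D_{K/L} = d(𝒪_K/𝒪_L) is the relative discriminant of K over L. -/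
/-!
Choose `β ∈ 𝒪 \ L`, so that `(1, β)` is an `L`-basis of `K`, and let `b : K → L` be the
`β`-coordinate. For a ring `S` with `𝒪_L ⊆ S ⊆ 𝒪_K` let `C_S` be the `𝒪_L`-module generated by
`b(S)`; it is a fractional ideal because `d · b(x) = Tr 1 · Tr (xβ) - Tr β · Tr x` for the
discriminant `d = disc(1, β)`. With `σ x = Tr x - x` one has `det(x₁, x₂) = b(σ(x₁) x₂)`, so the
discriminants of bases taken from `S` span the same module as the elements `d · c²`, `c ∈ b(S)`.
In a Dedekind domain `x² ∈ J²` forces `x ∈ J` (the square of `x J⁻¹` is integral), so squares of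
generators generate the square of a fractional ideal, and `d(S/𝒪_L) = d · C_S²`. Finally
`u ∈ L` satisfies `u 𝒪_K ⊆ 𝒪` iff `u C_{𝒪_K} ⊆ C_𝒪`, because an element of `𝒪_K` with vanishing
`β`-coordinate lies in `𝒪_L ⊆ 𝒪`. Thus `𝔣₀ = C_𝒪 / C_{𝒪_K}`, and the formula follows by
cancellation in the group of fractional ideals.
-/

open NumberField

/-- The relative discriminant set of a subset `O'` of `K` over `L` (for `K/L` quadratic): all
discriminants `det (Tr_{K/L}(xᵢxⱼ))` of `L`-bases `(x₁, x₂)` of `K` lying in `O'`. -/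
def discSet (L : Type*) {K : Type*} [Field L] [Field K] [Algebra L K] (O' : Set K) :
    Set L :=
  {a : L | ∃ x₁ x₂ : K, x₁ ∈ O' ∧ x₂ ∈ O' ∧ LinearIndependent L ![x₁, x₂] ∧
    a = Matrix.det !![Algebra.trace L K (x₁ * x₁), Algebra.trace L K (x₁ * x₂);
      Algebra.trace L K (x₂ * x₁), Algebra.trace L K (x₂ * x₂)]}

open Module Submodule nonZeroDivisors

theorem Algebra.discr_eq_det_sq_mul_discr {A C ι : Type*} [CommRing A] [CommRing C] [Algebra A C]
    [Fintype ι] [DecidableEq ι] (b : Basis ι A C) (v : ι → C) :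
    Algebra.discr A v = b.det v ^ 2 * Algebra.discr A b := by
  rw [b.det_apply, ← Algebra.discr_of_matrix_vecMul, b.toMatrix_map_vecMul]

theorem Algebra.discr_fin_two_s5 {A C : Type*} [CommRing A] [CommRing C] [Algebra A C]
    (v : Fin 2 → C) :
    Algebra.discr A v = trace A C (v 0 * v 0) * trace A C (v 1 * v 1)
      - trace A C (v 0 * v 1) * trace A C (v 1 * v 0) := by
  rw [Algebra.discr_def, Matrix.det_fin_two]
  simp only [Algebra.traceMatrix_apply, Algebra.traceForm_apply]

theorem discSet_eq_setOf_discr (L : Type*) {K : Type*} [Field L] [Field K] [Algebra L K]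
    (S : Set K) :
    discSet L S = {a | ∃ x₁ ∈ S, ∃ x₂ ∈ S, LinearIndependent L ![x₁, x₂] ∧
      a = Algebra.discr L ![x₁, x₂]} := by
  ext a
  simp [discSet, Algebra.discr_fin_two_s5]

namespace FractionalIdeal

variable {R K : Type*} [CommRing R] [Field K] [Algebra R K] [IsFractionRing R K]

theorem le_one_of_sq_le_one [IsIntegrallyClosed R] {A : FractionalIdeal R⁰ K}
    (h : A ^ 2 ≤ 1) : A ≤ 1 := by
  intro a ha
  have hsq : a ^ 2 ∈ (1 : FractionalIdeal R⁰ K) :=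
    h (by rw [pow_two, pow_two]; exact mul_mem_mul ha ha)
  rw [mem_one_iff, ← IsIntegrallyClosed.isIntegral_iff] at hsq ⊢
  exact hsq.of_pow two_pos

theorem mem_of_sq_mem_sq [IsDedekindDomain R] {J : FractionalIdeal R⁰ K} {x : K}
    (hx : x ^ 2 ∈ J ^ 2) : x ∈ J := by
  rcases eq_or_ne J 0 with rfl | hJ
  · simpa using hx
  have hA : (spanSingleton R⁰ x * J⁻¹) ^ 2 ≤ 1 := by
    rw [mul_pow, spanSingleton_pow, ← mul_inv_cancel₀ (pow_ne_zero 2 hJ), inv_pow]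
    exact mul_le_mul_left ((spanSingleton_le_iff_mem).mpr hx) _
  rw [← spanSingleton_le_iff_mem]
  calc spanSingleton R⁰ x = spanSingleton R⁰ x * J⁻¹ * J := by
        rw [mul_assoc, inv_mul_cancel₀ hJ, mul_one]
    _ ≤ 1 * J := mul_le_mul_left (le_one_of_sq_le_one hA) J
    _ = J := one_mul J

end FractionalIdeal

theorem Submodule.span_image_sq_of_isFractional {R K : Type*} [CommRing R] [IsDedekindDomain R]
    [Field K] [Algebra R K] [IsFractionRing R K] {T : Set K} (hT : IsFractional R⁰ (span R T)) :
    span R ((· ^ 2) '' T) = span R T ^ 2 := by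
  have hle : span R ((· ^ 2) '' T) ≤ span R T ^ 2 := span_le.mpr <| by
    rintro _ ⟨t, ht, rfl⟩
    exact Submodule.pow_mem_pow _ (subset_span ht) 2
  refine le_antisymm hle ?_
  let I : FractionalIdeal R⁰ K := ⟨span R T, hT⟩
  let J : FractionalIdeal R⁰ K := ⟨span R ((· ^ 2) '' T),
    FractionalIdeal.isFractional_of_le (J := I ^ 2) (by rwa [FractionalIdeal.coe_pow])⟩
  rw [pow_two, span_mul_span, span_le]
  rintro _ ⟨t, ht, s, hs, rfl⟩
  change t * s ∈ J
  refine FractionalIdeal.mem_of_sq_mem_sq ?_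
  rw [mul_pow, pow_two J]
  exact FractionalIdeal.mul_mem_mul (subset_span ⟨t, ht, rfl⟩) (subset_span ⟨s, hs, rfl⟩)

theorem exists_basis_fin_two_of_notMem_range {L K : Type*} [Field L] [Field K] [Algebra L K]
    (hdeg : finrank L K = 2) {β : K} (hβ : β ∉ Set.range (algebraMap L K)) :
    ∃ B : Basis (Fin 2) L K, B 0 = 1 ∧ B 1 = β := by
  have hli : LinearIndependent L ![1, β] :=
    (LinearIndependent.pair_iff' one_ne_zero).mpr fun a ha =>
      hβ ⟨a, by rw [Algebra.algebraMap_eq_smul_one, ha]⟩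
  have hcard : Fintype.card (Fin 2) = finrank L K := by rw [hdeg, Fintype.card_fin]
  refine ⟨basisOfLinearIndependentOfCardEqFinrank hli hcard, ?_, ?_⟩ <;>
    simp [coe_basisOfLinearIndependentOfCardEqFinrank]

namespace Module.Basis

variable {L K : Type*} [Field L] [Field K] [Algebra L K] (B : Basis (Fin 2) L K)

theorem det_fin_two_apply (x₁ x₂ : K) :
    B.det ![x₁, x₂] = B.repr x₁ 0 * B.repr x₂ 1 - B.repr x₂ 0 * B.repr x₁ 1 := by
  rw [B.det_apply, Matrix.det_fin_two]
  simp [Basis.toMatrix_apply]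

theorem repr_algebraMap_mul (u : L) (x : K) (i : Fin 2) :
    B.repr (algebraMap L K u * x) i = u * B.repr x i := by
  rw [← Algebra.smul_def, map_smul, Finsupp.smul_apply, smul_eq_mul]

theorem one_mem_span_image_repr_one {R : Type*} [Semiring R] [Module R L] {S : Set K}
    (hS : B 1 ∈ S) : (1 : L) ∈ span R ((B.repr · 1) '' S) :=
  subset_span ⟨B 1, hS, by simp⟩

variable {B} (hB : B 0 = 1)
include hB

theorem eq_algebraMap_add_algebraMap_mul (x : K) :
    x = algebraMap L K (B.repr x 0) + algebraMap L K (B.repr x 1) * B 1 := by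
  conv_lhs => rw [← B.sum_repr x]
  rw [Fin.sum_univ_two, hB, Algebra.smul_def, Algebra.smul_def, mul_one]

theorem repr_one : B.repr 1 = Finsupp.single 0 1 := by
  rw [← hB, B.repr_self]

theorem trace_eq_repr_add_repr_mul (x : K) :
    Algebra.trace L K x = B.repr x 0 + B.repr (x * B 1) 1 := by
  rw [Algebra.trace_eq_matrix_trace B x, Matrix.trace_fin_two, Algebra.leftMulMatrix_eq_repr_mul,
    Algebra.leftMulMatrix_eq_repr_mul, hB, mul_one]

theorem repr_mul_basis_one (x : K) :
    B.repr (x * B 1) 1 = B.repr x 0 + B.repr x 1 * B.repr (B 1 * B 1) 1 := by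
  conv_lhs => rw [eq_algebraMap_add_algebraMap_mul hB x]
  rw [add_mul, mul_assoc, map_add, Finsupp.add_apply, repr_algebraMap_mul, repr_algebraMap_mul,
    B.repr_self, Finsupp.single_eq_same, mul_one]

theorem repr_algebraMap_trace_sub_mul (x₁ x₂ : K) :
    B.repr ((algebraMap L K (Algebra.trace L K x₁) - x₁) * x₂) 1 = B.det ![x₁, x₂] := by
  have hprod : B.repr (x₁ * x₂) 1
      = B.repr x₁ 0 * B.repr x₂ 1 + B.repr x₁ 1 * B.repr (x₂ * B 1) 1 := by
    conv_lhs => rw [eq_algebraMap_add_algebraMap_mul hB x₁]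
    rw [add_mul, mul_assoc, map_add, Finsupp.add_apply, repr_algebraMap_mul, repr_algebraMap_mul,
      mul_comm (B 1)]
  rw [sub_mul, map_sub, Finsupp.sub_apply, repr_algebraMap_mul, hprod,
    trace_eq_repr_add_repr_mul hB, repr_mul_basis_one hB x₁, repr_mul_basis_one hB x₂,
    det_fin_two_apply]
  ring

theorem discr_mul_repr_one (x : K) :
    Algebra.discr L B * B.repr x 1 = Algebra.trace L K 1 * Algebra.trace L K (x * B 1)
      - Algebra.trace L K (B 1) * Algebra.trace L K x := by
  have htrace : ∀ y : K, Algebra.trace L K (x * y)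
      = B.repr x 0 * Algebra.trace L K y + B.repr x 1 * Algebra.trace L K (B 1 * y) := by
    intro y
    conv_lhs => rw [eq_algebraMap_add_algebraMap_mul hB x]
    rw [add_mul, mul_assoc, map_add, ← Algebra.smul_def, ← Algebra.smul_def, map_smul, map_smul,
      smul_eq_mul, smul_eq_mul]
  have hx := htrace 1
  rw [mul_one, mul_one] at hx
  rw [Algebra.discr_fin_two_s5, htrace, hx, hB]
  simp only [mul_one, one_mul]
  ring

theorem linearIndependent_one_of_repr_ne_zero {x : K} (hx : B.repr x 1 ≠ 0) :
    LinearIndependent L ![1, x] := by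
  refine ((B.is_basis_iff_det).mpr ?_).1
  rw [det_fin_two_apply, repr_one hB]
  simpa using hx

end Module.Basis

open Module.Basis

section QuadraticExtension

variable {L K : Type*} [Field L] [Field K] [Algebra L K] {B : Basis (Fin 2) L K}

theorem mem_span_image_repr_one_iff (O : Subring K)
    (hOL : ∀ x : L, IsIntegral ℤ x → algebraMap L K x ∈ O) {c : L} :
    c ∈ span (𝓞 L) ((B.repr · 1) '' O) ↔ ∃ x ∈ O, B.repr x 1 = c := by
  refine ⟨fun hc => ?_, fun ⟨x, hx, hxc⟩ => subset_span ⟨x, hx, hxc⟩⟩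
  induction hc using span_induction with
  | mem c hc => exact hc
  | zero => exact ⟨0, zero_mem O, by simp⟩
  | add c c' _ _ hc hc' =>
    obtain ⟨⟨x, hx, rfl⟩, ⟨x', hx', rfl⟩⟩ := And.intro hc hc'
    exact ⟨x + x', add_mem hx hx', by simp⟩
  | smul r c _ hc =>
    obtain ⟨x, hx, rfl⟩ := hc
    refine ⟨algebraMap L K r * x, mul_mem (hOL _ r.isIntegral_coe) hx, ?_⟩
    rw [repr_algebraMap_mul, Algebra.smul_def]

variable (hB : B 0 = 1)
include hB

theorem span_discSet_eq_span_discr_mul_repr_sq {R : Type*} [CommSemiring R] [Module R L]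
    (S : Subring K) (htr : ∀ x ∈ S, algebraMap L K (Algebra.trace L K x) ∈ S) :
    span R (discSet L (S : Set K))
      = span R ((fun x => Algebra.discr L B * B.repr x 1 ^ 2) '' S) := by
  rw [discSet_eq_setOf_discr]
  refine le_antisymm (span_le.mpr ?_) (span_le.mpr ?_)
  · rintro _ ⟨x₁, hx₁, x₂, hx₂, -, rfl⟩
    refine subset_span ⟨(algebraMap L K (Algebra.trace L K x₁) - x₁) * x₂,
      mul_mem (sub_mem (htr x₁ hx₁) hx₁) hx₂, ?_⟩
    dsimp only
    rw [repr_algebraMap_trace_sub_mul hB, Algebra.discr_eq_det_sq_mul_discr B ![x₁, x₂], mul_comm]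
  · rintro _ ⟨x, hx, rfl⟩
    by_cases hx1 : B.repr x 1 = 0
    · simp [hx1]
    refine subset_span ⟨1, one_mem S, x, hx, linearIndependent_one_of_repr_ne_zero hB hx1, ?_⟩
    dsimp only
    rw [Algebra.discr_eq_det_sq_mul_discr B ![1, x], det_fin_two_apply, repr_one hB]
    simp [mul_comm]

theorem span_discSet_eq_span_discr_mul_sq {R : Type*} [CommRing R] [IsDedekindDomain R]
    [Algebra R L] [IsFractionRing R L] (S : Subring K)
    (htr : ∀ x ∈ S, algebraMap L K (Algebra.trace L K x) ∈ S)
    (hS : IsFractional R⁰ (span R ((B.repr · 1) '' S))) :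
    span R (discSet L (S : Set K))
      = span R {Algebra.discr L B} * span R ((B.repr · 1) '' S) ^ 2 := by
  rw [span_discSet_eq_span_discr_mul_repr_sq hB S htr, ← span_image_sq_of_isFractional hS,
    span_mul_span, Set.singleton_mul, Set.image_image, Set.image_image]

theorem mem_of_repr_one_eq_zero (O : Subring K)
    (hOL : ∀ x : L, IsIntegral ℤ x → algebraMap L K x ∈ O) {z : K} (hz : IsIntegral ℤ z)
    (h : B.repr z 1 = 0) : z ∈ O := by
  have hzL : z = algebraMap L K (B.repr z 0) := by
    simpa [h] using eq_algebraMap_add_algebraMap_mul hB z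
  rw [hzL] at hz ⊢
  exact hOL _ ((isIntegral_algebraMap_iff (algebraMap L K).injective).mp hz)

variable [NumberField L]

theorem isFractional_span_image_repr_one (hB1 : IsIntegral ℤ (B 1)) :
    IsFractional (𝓞 L)⁰ (span (𝓞 L) ((B.repr · 1) '' {x : K | IsIntegral ℤ x})) := by
  have := Module.Finite.of_basis B
  have hd : IsIntegral ℤ (Algebra.discr L B) :=
    Algebra.discr_isIntegral L fun i => by fin_cases i <;> simp [hB, hB1, isIntegral_one]
  refine FractionalIdeal.isFractional_span_iff.mpr ⟨⟨_, hd⟩, mem_nonZeroDivisors_of_ne_zero ?_, ?_⟩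
  · exact fun h => Algebra.discr_not_zero_of_basis L B (congrArg Subtype.val h)
  rintro _ ⟨x, hx, rfl⟩
  have htr : ∀ y : K, IsIntegral ℤ y → IsIntegral ℤ (Algebra.trace L K y) :=
    fun y hy => Algebra.isIntegral_trace hy
  refine ⟨⟨Algebra.trace L K 1 * Algebra.trace L K (x * B 1)
      - Algebra.trace L K (B 1) * Algebra.trace L K x, ?_⟩, ?_⟩
  · exact ((htr 1 isIntegral_one).mul (htr _ (hx.mul hB1))).sub ((htr _ hB1).mul (htr x hx))
  · exact (discr_mul_repr_one hB x).symm

theorem span_conductor_eq_div (O : Subring K) (hOint : ∀ x ∈ O, IsIntegral ℤ x)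
    (hOL : ∀ x : L, IsIntegral ℤ x → algebraMap L K x ∈ O) (hB1 : IsIntegral ℤ (B 1))
    {I J : FractionalIdeal (𝓞 L)⁰ L}
    (hI : (I : Submodule (𝓞 L) L) = span (𝓞 L) ((B.repr · 1) '' O))
    (hJ : (J : Submodule (𝓞 L) L) = span (𝓞 L) ((B.repr · 1) '' {x : K | IsIntegral ℤ x})) :
    span (𝓞 L) {u : L | IsIntegral ℤ u ∧ ∀ y : K, IsIntegral ℤ y → algebraMap L K u * y ∈ O}
      = ↑(I / J) := by
  have hmemI (c : L) : c ∈ I ↔ ∃ x ∈ O, B.repr x 1 = c := by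
    rw [← FractionalIdeal.mem_coe, hI]
    exact mem_span_image_repr_one_iff O hOL
  have hmemJ (c : L) : c ∈ J ↔ ∃ x : K, IsIntegral ℤ x ∧ B.repr x 1 = c := by
    rw [← FractionalIdeal.mem_coe, hJ]
    exact mem_span_image_repr_one_iff (integralClosure ℤ K).toSubring fun x hx => hx.algebraMap
  have hIJ : I ≤ J := by
    rw [← FractionalIdeal.coe_le_coe, hI, hJ]
    exact span_mono (Set.image_mono hOint)
  have hJ0 : J ≠ 0 := by
    rw [← FractionalIdeal.coeToSubmodule_ne_bot, hJ]
    exact (Submodule.ne_bot_iff _).mpr ⟨1, B.one_mem_span_image_repr_one hB1, one_ne_zero⟩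
  suffices hset : {u : L | IsIntegral ℤ u ∧ ∀ y : K, IsIntegral ℤ y → algebraMap L K u * y ∈ O}
      = (((I / J : FractionalIdeal (𝓞 L)⁰ L) : Submodule (𝓞 L) L) : Set L) by
    rw [hset, span_eq]
  ext u
  rw [SetLike.mem_coe, FractionalIdeal.mem_coe, FractionalIdeal.mem_div_iff_of_ne_zero hJ0]
  constructor
  · rintro ⟨-, huO⟩ _ hc
    obtain ⟨y, hy, rfl⟩ := (hmemJ _).mp hc
    exact (hmemI _).mpr ⟨_, huO y hy, repr_algebraMap_mul B u y 1⟩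
  · intro hu
    have hu_int : IsIntegral ℤ u := by
      have huJ : u ∈ J / J := (FractionalIdeal.mem_div_iff_of_ne_zero hJ0).mpr
        fun c hc => hIJ (hu c hc)
      rw [div_self hJ0, FractionalIdeal.mem_one_iff] at huJ
      obtain ⟨r, rfl⟩ := huJ
      exact r.isIntegral_coe
    refine ⟨hu_int, fun y hy => ?_⟩
    obtain ⟨w, hwO, hw⟩ := (hmemI _).mp (hu _ ((hmemJ _).mpr ⟨y, hy, rfl⟩))
    have hdiff : algebraMap L K u * y - w ∈ O :=
      mem_of_repr_one_eq_zero hB O hOL (((hu_int.algebraMap).mul hy).sub (hOint w hwO))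
        (by rw [map_sub, Finsupp.sub_apply, repr_algebraMap_mul, hw, sub_self])
    simpa using add_mem hdiff hwO

end QuadraticExtension

theorem stmt_5_general {L K : Type*} [Field L] [NumberField L] [Field K]
    [Algebra L K] (hdeg : Module.finrank L K = 2)
    (O : Subring K)
    (hOint : ∀ x ∈ O, IsIntegral ℤ x)
    (hOL : ∀ x : L, IsIntegral ℤ x → algebraMap L K x ∈ O)
    (hOfull : ∃ β ∈ O, β ∉ Set.range (algebraMap L K)) :
    Submodule.span (𝓞 L) (discSet L (O : Set K))
      = (Submodule.span (𝓞 L) {u : L | IsIntegral ℤ u ∧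
            ∀ y : K, IsIntegral ℤ y → algebraMap L K u * y ∈ O}) ^ 2
        * Submodule.span (𝓞 L) (discSet L {x : K | IsIntegral ℤ x}) := by
  obtain ⟨β, hβO, hβL⟩ := hOfull
  obtain ⟨B, hB0, rfl⟩ := exists_basis_fin_two_of_notMem_range hdeg hβL
  have := Module.Finite.of_basis B
  let 𝒪K := (integralClosure ℤ K).toSubring
  have hKL : ∀ x : L, IsIntegral ℤ x → algebraMap L K x ∈ 𝒪K := fun x hx => hx.algebraMap
  let C𝒪K : FractionalIdeal (𝓞 L)⁰ L := ⟨_, isFractional_span_image_repr_one hB0 (hOint _ hβO)⟩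
  let C𝒪 : FractionalIdeal (𝓞 L)⁰ L :=
    ⟨_, FractionalIdeal.isFractional_of_le (J := C𝒪K) (span_mono (Set.image_mono hOint))⟩
  have hC𝒪K : C𝒪K ≠ 0 := FractionalIdeal.coeToSubmodule_ne_bot.mp
    ((Submodule.ne_bot_iff _).mpr ⟨1, B.one_mem_span_image_repr_one (hOint _ hβO), one_ne_zero⟩)
  rw [span_discSet_eq_span_discr_mul_sq hB0 O
      (fun x hx => hOL _ (Algebra.isIntegral_trace (hOint x hx))) C𝒪.isFractional,
    show {x : K | IsIntegral ℤ x} = (𝒪K : Set K) from rfl,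
    span_discSet_eq_span_discr_mul_sq hB0 𝒪K
      (fun x hx => hKL _ (Algebra.isIntegral_trace hx)) C𝒪K.isFractional,
    span_conductor_eq_div hB0 O hOint hOL (hOint _ hβO) (I := C𝒪) (J := C𝒪K) rfl rfl,
    ← FractionalIdeal.coe_spanSingleton (𝓞 L)⁰]
  change ((_ : FractionalIdeal (𝓞 L)⁰ L) : Submodule (𝓞 L) L) * (C𝒪 : Submodule (𝓞 L) L) ^ 2
    = ((C𝒪 / C𝒪K : FractionalIdeal (𝓞 L)⁰ L) : Submodule (𝓞 L) L) ^ 2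
      * (_ * (C𝒪K : Submodule (𝓞 L) L) ^ 2)
  simp only [← FractionalIdeal.coe_pow, ← FractionalIdeal.coe_mul]
  congr 1
  field_simp

/-- Let `K/L` be a quadratic extension of number fields and `𝒪 ⊆ 𝒪_K` an
order containing `𝒪_L`, with conductor `𝔣 = {x ∈ 𝒪_K : x𝒪_K ⊆ 𝒪}` and `𝔣₀ = 𝔣 ∩ 𝒪_L`.  Then
the relative discriminants satisfy `d(𝒪/𝒪_L) = 𝔣₀² · D_{K/L}` where `D_{K/L} = d(𝒪_K/𝒪_L)`,
all viewed as `𝒪_L`-submodules of `L`. -/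
theorem stmt_5 {L K : Type*} [Field L] [NumberField L] [Field K] [NumberField K]
    [Algebra L K] (hdeg : Module.finrank L K = 2)
    (O : Subring K)
    (hOint : ∀ x ∈ O, IsIntegral ℤ x)
    (hOL : ∀ x : L, IsIntegral ℤ x → algebraMap L K x ∈ O)
    (hOfull : ∃ β ∈ O, β ∉ Set.range (algebraMap L K)) :
    Submodule.span (𝓞 L) (discSet L (O : Set K))
      = (Submodule.span (𝓞 L) {u : L | IsIntegral ℤ u ∧
            ∀ y : K, IsIntegral ℤ y → algebraMap L K u * y ∈ O}) ^ 2
        * Submodule.span (𝓞 L) (discSet L {x : K | IsIntegral ℤ x}) :=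
  stmt_5_general hdeg O hOint hOL hOfull
end

section
/- Let Λ be a free group on two generators and L ◁ Λ a normal subgroup of infinite index. If L is finitely generated then L is trivial; equivalently, every nontrivial finitely generated normal subgroup of a free group has finite index. -/
/-!
For a surjection `π : F(α) → Q`, the Fox derivatives of `u ∈ F(α)` pushed forward to `ℤ[Q]`
form a crossed homomorphism `d : F(α) → ℤ[Q]^α`, additive on `ker π` and with
`d (u n u⁻¹) = π u • d n` there. If `ker π` is finitely generated, all `d n` with `n ∈ ker π`
are supported in one finite subset of `Q × α`, yet every `Q`-translate of `d n` is again such a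
value; as `Q` is infinite, `d` vanishes on `ker π`.

On the other hand, read the reduced word of a nontrivial `n ∈ ker π` as a closed path in the
Cayley graph of `Q`: `d n` counts the signed traversals of each edge. If `d n = 0`, the edge of
the first letter is traversed backwards by a later letter, and the subword strictly between the
two is a shorter nontrivial element of `ker π`.
-/

open Finsupp

lemma Finsupp.exists_eq_neg_of_single_add_sum_eq_zero {X ι : Type*} {s : Finset ι} {a : X}
    {ε : ℤˣ} {k : ι → X} {δ : ι → ℤˣ}
    (h : single a (ε : ℤ) + ∑ i ∈ s, single (k i) (δ i : ℤ) = 0) :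
    ∃ i ∈ s, k i = a ∧ δ i = -ε := by
  classical
  by_contra! hne
  have hterm : ∀ i ∈ s, 0 ≤ (ε : ℤ) * single (k i) (δ i : ℤ) a := by
    intro i hi
    rw [single_apply]
    split_ifs with hk
    · have hδ : δ i = ε := by simpa using Int.units_ne_iff_eq_neg.mp (hne i hi hk)
      rw [hδ, ← Units.val_mul, Int.units_mul_self]
      exact zero_le_one
    · rw [mul_zero]
  have ha := congrArg (fun f => (ε : ℤ) * f a) h
  simp only [coe_add, coe_finsetSum, Pi.add_apply, Finset.sum_apply, single_eq_same, mul_add,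
    ← Units.val_mul, Int.units_mul_self, Units.val_one, Finset.mul_sum, coe_zero, Pi.zero_apply,
    mul_zero] at ha
  linarith [Finset.sum_nonneg hterm]

noncomputable section

namespace FreeGroup

variable {α Q : Type*} [Group Q]

/-- `ℤ[Q]^α` is modelled as `Q × α →₀ ℤ`, with `Q` acting by left multiplication on `Q`. -/
abbrev prodLeftMulAction : MulAction Q (Q × α) where
  smul q p := (q * p.1, p.2)
  one_smul p := by simp [HSMul.hSMul]
  mul_smul q q' p := by simp [HSMul.hSMul, mul_assoc]

attribute [local instance] prodLeftMulAction Finsupp.comapSMul Finsupp.comapMulAction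
  Finsupp.comapDistribMulAction

@[simp] lemma smul_prod_mk (q q' : Q) (x : α) : q • (q', x) = (q * q', x) := rfl

def foxAction : Q →* MulAut (Multiplicative (Q × α →₀ ℤ)) :=
  (MulAutMultiplicative (G := Q × α →₀ ℤ)).symm.toMonoidHom.comp
    (DistribMulAction.toAddAut Q (Q × α →₀ ℤ))

def foxHom (π : FreeGroup α →* Q) : FreeGroup α →* Multiplicative (Q × α →₀ ℤ) ⋊[foxAction] Q :=
  FreeGroup.lift fun x => ⟨.ofAdd (single (1, x) 1), π (of x)⟩

/-- The coefficient of `(q, x)` in `foxDeriv π u` is that of `q` in `π (∂u/∂x)`. -/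
def foxDeriv (π : FreeGroup α →* Q) (u : FreeGroup α) : Q × α →₀ ℤ :=
  (foxHom π u).left.toAdd

variable (π : FreeGroup α →* Q)

lemma foxHom_right (u : FreeGroup α) : (foxHom π u).right = π u := by
  rw [← SemidirectProduct.rightHom_eq_right, ← MonoidHom.comp_apply]
  congr 1
  ext x
  simp [foxHom]

lemma foxDeriv_mul (u v : FreeGroup α) :
    foxDeriv π (u * v) = foxDeriv π u + π u • foxDeriv π v := by
  rw [foxDeriv, _root_.map_mul, SemidirectProduct.mul_left, foxHom_right]
  rfl

@[simp] lemma foxDeriv_one : foxDeriv π 1 = 0 := by simp [foxDeriv]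

@[simp] lemma foxDeriv_of (x : α) : foxDeriv π (of x) = single (1, x) 1 := by
  simp [foxDeriv, foxHom]

lemma foxDeriv_inv (u : FreeGroup α) : foxDeriv π u⁻¹ = -((π u)⁻¹ • foxDeriv π u) := by
  have h := foxDeriv_mul π u⁻¹ u
  rw [inv_mul_cancel, foxDeriv_one, _root_.map_inv] at h
  exact eq_neg_of_add_eq_zero_left h.symm

variable {π}

lemma foxDeriv_mul_of_mem_ker {u : FreeGroup α} (hu : u ∈ π.ker) (v : FreeGroup α) :
    foxDeriv π (u * v) = foxDeriv π u + foxDeriv π v := by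
  rw [foxDeriv_mul, MonoidHom.mem_ker.mp hu, one_smul]

lemma foxDeriv_inv_of_mem_ker {u : FreeGroup α} (hu : u ∈ π.ker) :
    foxDeriv π u⁻¹ = -foxDeriv π u := by
  rw [foxDeriv_inv, MonoidHom.mem_ker.mp hu, inv_one, one_smul]

lemma foxDeriv_conj_of_mem_ker {n : FreeGroup α} (hn : n ∈ π.ker) (u : FreeGroup α) :
    foxDeriv π (u * n * u⁻¹) = π u • foxDeriv π n := by
  rw [foxDeriv_mul, foxDeriv_mul, foxDeriv_inv, _root_.map_mul, MonoidHom.mem_ker.mp hn, mul_one,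
    smul_neg, smul_inv_smul]
  abel

lemma foxDeriv_mem_supported_of_closure_eq {S : Set (FreeGroup α)}
    (hS : Subgroup.closure S = π.ker) {n : FreeGroup α} (hn : n ∈ π.ker) :
    foxDeriv π n ∈ supported ℤ ℤ (⋃ s ∈ S, ((foxDeriv π s).support : Set (Q × α))) := by
  rw [← hS] at hn
  refine (Subgroup.closure_induction
    (p := fun u _ => u ∈ π.ker ∧ foxDeriv π u ∈ supported ℤ ℤ _) ?_ ?_ ?_ ?_ hn).2
  · intro s hs
    exact ⟨hS ▸ Subgroup.subset_closure hs, (mem_supported ℤ _).mpr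
      (Set.subset_biUnion_of_mem (u := fun s => ((foxDeriv π s).support : Set (Q × α))) hs)⟩
  · simp
  · rintro u v - - ⟨hu, hu'⟩ ⟨hv, hv'⟩
    exact ⟨mul_mem hu hv, foxDeriv_mul_of_mem_ker hu v ▸ add_mem hu' hv'⟩
  · rintro u - ⟨hu, hu'⟩
    exact ⟨inv_mem hu, foxDeriv_inv_of_mem_ker hu ▸ neg_mem hu'⟩

lemma eq_zero_of_forall_smul_mem_supported [Infinite Q] {E : Set (Q × α)} (hE : E.Finite)
    {f : Q × α →₀ ℤ} (hf : ∀ q : Q, q • f ∈ supported ℤ ℤ E) : f = 0 := by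
  by_contra hne
  obtain ⟨a, ha⟩ := Finsupp.support_nonempty_iff.mpr hne
  have hmem : ∀ q : Q, q • a ∈ E := fun q =>
    (mem_supported ℤ _).mp (hf q) (by simpa using ha)
  have hinj : Function.Injective fun q : Q => q • a := fun q q' h =>
    mul_right_cancel (congrArg Prod.fst h)
  exact Set.infinite_of_injective_forall_mem hinj hmem hE

theorem foxDeriv_eq_zero_of_mem_ker [Infinite Q] (hπ : Function.Surjective π) (hfg : π.ker.FG)
    {n : FreeGroup α} (hn : n ∈ π.ker) : foxDeriv π n = 0 := by
  obtain ⟨S, hS⟩ := hfg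
  have hE : (⋃ s ∈ (S : Set (FreeGroup α)), ((foxDeriv π s).support : Set (Q × α))).Finite :=
    S.finite_toSet.biUnion fun s _ => (foxDeriv π s).support.finite_toSet
  refine eq_zero_of_forall_smul_mem_supported hE fun q => ?_
  obtain ⟨u, rfl⟩ := hπ q
  rw [← foxDeriv_conj_of_mem_ker hn]
  exact foxDeriv_mem_supported_of_closure_eq hS (π.normal_ker.conj_mem n hn u)

variable (π)

lemma foxDeriv_mk_cons (p : α × Bool) (t : List (α × Bool)) :
    foxDeriv π (mk (p :: t)) = foxDeriv π (mk [p]) + π (mk [p]) • foxDeriv π (mk t) := by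
  rw [← foxDeriv_mul, mul_mk, List.singleton_append]

lemma foxDeriv_mk (t : List (α × Bool)) :
    foxDeriv π (mk t) = ∑ i : Fin t.length, π (mk (t.take i)) • foxDeriv π (mk [t[i]]) := by
  induction t with
  | nil => simp [← one_eq_mk]
  | cons p t ih =>
    rw [foxDeriv_mk_cons, ih, Finset.smul_sum]
    refine ((Fin.sum_univ_succ _).trans ?_).symm
    congr 1
    · simp [← one_eq_mk]
    · refine Finset.sum_congr rfl fun i _ => ?_
      rw [smul_smul, ← _root_.map_mul, mul_mk]
      simp

lemma mk_singleton_true (x : α) : mk [(x, true)] = of x := rfl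

lemma mk_singleton_false (x : α) : mk [(x, false)] = (of x)⁻¹ := by
  simp [of, inv_mk, invRev]

lemma foxDeriv_mk_singleton (p : α × Bool) :
    foxDeriv π (mk [p]) =
      single (if p.2 then 1 else (π (of p.1))⁻¹, p.1) ((if p.2 then 1 else -1 : ℤˣ) : ℤ) := by
  obtain ⟨x, b⟩ := p
  cases b
  · simp [mk_singleton_false, foxDeriv_inv]
  · exact foxDeriv_of π x

variable {π}

lemma exists_inverse_letter_of_foxDeriv_eq_zero {x : α} {b : Bool} {t : List (α × Bool)}
    (h : foxDeriv π (mk ((x, b) :: t)) = 0) :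
    ∃ i : Fin t.length, t[i] = (x, !b) ∧ mk (t.take i) ∈ π.ker := by
  rw [foxDeriv_mk_cons, foxDeriv_mk π t, Finset.smul_sum] at h
  simp only [foxDeriv_mk_singleton, smul_smul, comapSMul_single] at h
  -- the later letter retracing the first letter's edge backwards
  obtain ⟨i, -, hkey, hsign⟩ := exists_eq_neg_of_single_add_sum_eq_zero h
  refine ⟨i, ?_⟩
  rcases hi : t[i] with ⟨y, c⟩
  rw [hi] at hkey hsign
  rw [MonoidHom.mem_ker]
  cases b <;> cases c <;>
    simp only [mk_singleton_true, mk_singleton_false, _root_.map_inv, Bool.false_eq_true,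
      ↓reduceIte, smul_prod_mk, Prod.mk.injEq, mul_one, mul_eq_left, neg_neg, neg_units_ne_self,
      units_ne_neg_self, Bool.not_false, Bool.not_true, and_true] at hkey hsign ⊢
  all_goals
    obtain ⟨hq, rfl⟩ := hkey
    simpa [mul_inv_eq_one] using hq

lemma IsReduced.mk_eq_one_iff {L : List (α × Bool)} [DecidableEq α] (h : IsReduced L) :
    mk L = 1 ↔ L = [] := by
  rw [← toWord_eq_nil_iff, toWord_mk, h.reduce_eq]

lemma exists_mem_ker_norm_lt [DecidableEq α] (hd : ∀ n ∈ π.ker, foxDeriv π n = 0)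
    {n : FreeGroup α} (hn : n ∈ π.ker) (h1 : n ≠ 1) : ∃ m ∈ π.ker, m ≠ 1 ∧ norm m < norm n := by
  obtain ⟨⟨x, b⟩, t, hw⟩ := List.exists_cons_of_ne_nil (toWord_eq_nil_iff.not.mpr h1)
  have hred : IsReduced ((x, b) :: t) := hw ▸ isReduced_toWord
  have hmk : mk ((x, b) :: t) = n := hw ▸ mk_toWord
  obtain ⟨i, hi, hker⟩ := exists_inverse_letter_of_foxDeriv_eq_zero (hmk ▸ hd n hn)
  have hi0 : (i : ℕ) ≠ 0 := by
    rintro h0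
    cases t with
    | nil => exact i.elim0
    | cons c s =>
      obtain rfl : c = (x, !b) := by simpa [h0] using hi
      simp [isReduced_cons_cons] at hred
  have hreds : IsReduced (t.take i) :=
    hred.infix ((List.take_prefix i t).isInfix.trans (List.suffix_cons _ t).isInfix)
  refine ⟨mk (t.take i), hker, ?_, ?_⟩
  · rw [Ne, hreds.mk_eq_one_iff, ← List.length_eq_zero_iff, List.length_take]
    omega
  · calc norm (mk (t.take i)) ≤ (t.take i).length := norm_mk_le
      _ < ((x, b) :: t).length := by simp
      _ = norm n := by rw [← hw]; rfl

theorem ker_eq_bot_of_foxDeriv_eq_zero (hd : ∀ n ∈ π.ker, foxDeriv π n = 0) : π.ker = ⊥ := by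
  classical
  refine (Subgroup.eq_bot_iff_forall _).mpr fun n hn => ?_
  induction h : norm n using Nat.strong_induction_on generalizing n with
  | _ k ih =>
    by_contra h1
    obtain ⟨m, hm, hm1, hlt⟩ := exists_mem_ker_norm_lt hd hn h1
    exact hm1 (ih _ (h ▸ hlt) m hm rfl)

theorem ker_eq_bot_of_fg [Infinite Q] (hπ : Function.Surjective π) (hfg : π.ker.FG) :
    π.ker = ⊥ :=
  ker_eq_bot_of_foxDeriv_eq_zero fun _ hn => foxDeriv_eq_zero_of_mem_ker hπ hfg hn

end FreeGroup

end

/-- Karrass–Solitar. Every finitely generated normal subgroup of infinite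
index in a free group on two generators is trivial; equivalently, every nontrivial finitely
generated normal subgroup of a free group has finite index.  (In Mathlib, `L.index = 0` means
that `L` has infinite index.) -/
theorem stmt_11 (L : Subgroup (FreeGroup (Fin 2))) (hN : L.Normal)
    (hfg : Subgroup.FG L) (hidx : L.index = 0) : L = ⊥ := by
  have : Infinite (FreeGroup (Fin 2) ⧸ L) := Subgroup.index_eq_zero_iff_infinite.mp hidx
  rw [← QuotientGroup.ker_mk' L] at hfg ⊢
  exact FreeGroup.ker_eq_bot_of_fg (QuotientGroup.mk'_surjective L) hfg
end

section
/- Let h₂ : ℝ → ℝ be continuous with |h₂(r)| ≤ C·|r|^k near 0 for some k ≥ 2/ε and bounded with rapid decay, and let 0 < θ ≤ π/2 with θ ≥ T^{-1+ε}. Then for T sufficiently large, |∫_{-∞}^{∞} (cosh((π-2θ)Tr)/cosh(πTr)) · h₂(r) dr| = O(T^{-2}), where the implied constant is independent of θ and T. -/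
/-!
Since `cosh y ≤ e^{|y|} ≤ 2 cosh y`, the kernel is at most `2 e^{-2θT|r|}`, and `h₂` (bounded,
and `O(|r|^k)` near `0`) is `O(|r|^k)` everywhere. The integral is therefore dominated by
`∫ |r|^k e^{-2θT|r|} dr = 2 Γ(k+1) (2θT)^{-(k+1)}`, and `2θT ≥ T^ε` with `ε (k+1) ≥ 2` turns
this into `O(T^{-2})`.
-/

open Real MeasureTheory Set

namespace Real

lemma cosh_le_exp_abs (x : ℝ) : cosh x ≤ exp |x| := by
  rw [cosh_eq]
  linarith [exp_le_exp.2 (le_abs_self x), exp_le_exp.2 (neg_le_abs x)]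

lemma exp_abs_le_two_mul_cosh (x : ℝ) : exp |x| ≤ 2 * cosh x := by
  rw [cosh_eq]
  rcases abs_cases x with ⟨h, _⟩ | ⟨h, _⟩ <;> rw [h] <;>
    linarith [exp_pos x, exp_pos (-x)]

lemma cosh_mul_div_cosh_mul_le (a b x : ℝ) :
    cosh (a * x) / cosh (b * x) ≤ 2 * exp ((|a| - |b|) * |x|) := by
  have hnum : cosh (a * x) ≤ exp (|a| * |x|) := by
    simpa only [abs_mul] using cosh_le_exp_abs (a * x)
  have hden : exp (|b| * |x|) / 2 ≤ cosh (b * x) := by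
    have := exp_abs_le_two_mul_cosh (b * x)
    rw [abs_mul] at this
    linarith
  calc cosh (a * x) / cosh (b * x) ≤ exp (|a| * |x|) / (exp (|b| * |x|) / 2) :=
        div_le_div₀ (exp_pos _).le hnum (by positivity) hden
    _ = 2 * exp ((|a| - |b|) * |x|) := by
        rw [sub_mul, exp_sub]
        ring

end Real

lemma integral_abs_rpow_mul_exp_neg_mul_abs {k c : ℝ} (hk : -1 < k) (hc : 0 < c) :
    ∫ x : ℝ, |x| ^ k * exp (-(c * |x|)) = 2 * Gamma (k + 1) / c ^ (k + 1) := by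
  have hGamma := integral_rpow_mul_exp_neg_mul_Ioi (by linarith : 0 < k + 1) hc
  rw [add_sub_cancel_right] at hGamma
  rw [integral_comp_abs (f := fun t => t ^ k * exp (-(c * t))), hGamma,
    div_rpow zero_le_one hc.le, one_rpow]
  ring

lemma integrable_abs_rpow_mul_exp_neg_mul_abs {k c : ℝ} (hk : -1 < k) (hc : 0 < c) :
    Integrable fun x : ℝ => |x| ^ k * exp (-(c * |x|)) :=
  .of_integral_ne_zero <| by
    rw [integral_abs_rpow_mul_exp_neg_mul_abs hk hc]
    have := Gamma_pos_of_pos (by linarith : 0 < k + 1)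
    positivity

lemma abs_integral_le_of_abs_le_mul_rpow_mul_exp {f : ℝ → ℝ} {A k c : ℝ} (hk : -1 < k)
    (hc : 0 < c) (hf : ∀ x, |f x| ≤ A * (|x| ^ k * exp (-(c * |x|)))) :
    |∫ x, f x| ≤ A * (2 * Gamma (k + 1) / c ^ (k + 1)) := by
  rw [← integral_abs_rpow_mul_exp_neg_mul_abs hk hc, ← integral_const_mul]
  exact norm_integral_le_of_norm_le (f := f)
    ((integrable_abs_rpow_mul_exp_neg_mul_abs hk hc).const_mul A) (ae_of_all _ hf)

lemma abs_le_max_mul_rpow_of_abs_le_mul_rpow {h : ℝ → ℝ} {C D k : ℝ} (hk : 0 ≤ k)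
    (hnear : ∀ r, |r| ≤ 1 → |h r| ≤ C * |r| ^ k) (hbdd : ∀ r, |h r| ≤ D) (r : ℝ) :
    |h r| ≤ max C D * |r| ^ k := by
  rcases le_or_gt |r| 1 with hr | hr
  · exact (hnear r hr).trans (by gcongr; exact le_max_left _ _)
  · calc |h r| ≤ max C D * 1 := (hbdd r).trans (by simp)
      _ ≤ max C D * |r| ^ k := by
          have : 0 ≤ max C D := (abs_nonneg _).trans ((hbdd r).trans (le_max_right _ _))
          gcongr
          exact one_le_rpow hr.le hk

lemma sq_le_rpow_of_rpow_le {T c ε p : ℝ} (hT : 1 ≤ T) (hp : 0 ≤ p)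
    (hεp : 2 ≤ ε * p) (hc : T ^ ε ≤ c) : T ^ 2 ≤ c ^ p :=
  calc T ^ 2 = T ^ (2 : ℝ) := (rpow_two T).symm
    _ ≤ T ^ (ε * p) := rpow_le_rpow_of_exponent_le hT hεp
    _ = (T ^ ε) ^ p := rpow_mul (by linarith) ε p
    _ ≤ c ^ p := rpow_le_rpow (by positivity) hc hp

theorem stmt_12_general (ε : ℝ) (hε : 0 < ε)
    (h₂ : ℝ → ℝ)
    (k C : ℝ) (hk : 2 / ε ≤ k) (hC : 0 < C)
    (hnear : ∀ r : ℝ, |r| ≤ 1 → |h₂ r| ≤ C * |r| ^ k)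
    (hdecay : ∀ N : ℕ, ∃ D : ℝ, ∀ r : ℝ, |h₂ r| * (1 + |r|) ^ N ≤ D) :
    ∃ (C' T₀ : ℝ), 0 < C' ∧ ∀ T ≥ T₀, ∀ θ : ℝ,
      T ^ (-1 + ε : ℝ) ≤ θ → θ ≤ Real.pi / 2 →
      |∫ r : ℝ, Real.cosh ((Real.pi - 2 * θ) * T * r) / Real.cosh (Real.pi * T * r) * h₂ r|
        ≤ C' / T ^ 2 := by
  obtain ⟨D, hD⟩ := hdecay 0
  have hk0 : 0 < k := (div_pos two_pos hε).trans_le hk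
  have hεk : 2 ≤ ε * (k + 1) := by
    rw [div_le_iff₀ hε] at hk
    nlinarith
  have hM : 0 < max C D := hC.trans_le (le_max_left _ _)
  have hh := abs_le_max_mul_rpow_of_abs_le_mul_rpow hk0.le hnear (by simpa using hD)
  refine ⟨4 * max C D * Gamma (k + 1), 1, by positivity, fun T hT θ hθ hθπ => ?_⟩
  have hT0 : 0 < T := one_pos.trans_le hT
  have hθ0 : 0 < θ := (rpow_pos_of_pos hT0 _).trans_le hθ
  have hc : T ^ ε ≤ 2 * θ * T := by
    have : T ^ (-1 + ε) * T = T ^ ε := by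
      rw [← rpow_add_one hT0.ne']
      ring_nf
    nlinarith [mul_le_mul_of_nonneg_right hθ hT0.le]
  have hbound : ∀ r, |cosh ((π - 2 * θ) * T * r) / cosh (π * T * r) * h₂ r|
      ≤ 2 * max C D * (|r| ^ k * exp (-(2 * θ * T * |r|))) := by
    intro r
    have hexp : (|(π - 2 * θ) * T| - |π * T|) * |r| = -(2 * θ * T * |r|) := by
      rw [abs_of_nonneg (by nlinarith), abs_of_nonneg (by positivity)]
      ring
    rw [abs_mul, abs_of_pos (div_pos (cosh_pos _) (cosh_pos _))]
    calc _ ≤ (2 * exp (-(2 * θ * T * |r|))) * (max C D * |r| ^ k) := by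
          rw [← hexp]
          gcongr
          · exact cosh_mul_div_cosh_mul_le _ _ _
          · exact hh r
      _ = _ := by ring
  calc _ ≤ 2 * max C D * (2 * Gamma (k + 1) / (2 * θ * T) ^ (k + 1)) :=
        abs_integral_le_of_abs_le_mul_rpow_mul_exp (by linarith) (by positivity) hbound
    _ ≤ 2 * max C D * (2 * Gamma (k + 1) / T ^ 2) := by
        have := Gamma_pos_of_pos (by linarith : 0 < k + 1)
        gcongr
        exact sq_le_rpow_of_rpow_le hT (by linarith) hεk hc
    _ = 4 * max C D * Gamma (k + 1) / T ^ 2 := by ring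

/-- Let `h₂ : ℝ → ℝ` be continuous, with `|h₂ r| ≤ C |r|^k` near `0` for some
`k ≥ 2/ε`, and bounded with rapid decay.  Then for `T` sufficiently large, uniformly over
`θ ∈ [T^{-1+ε}, π/2]`,
`|∫ r, cosh((π-2θ)Tr)/cosh(πTr) · h₂ r dr| = O(T^{-2})`,
with implied constant independent of `θ` and `T`. -/
theorem stmt_12 (ε : ℝ) (hε : 0 < ε) (hε1 : ε < 1)
    (h₂ : ℝ → ℝ) (hcont : Continuous h₂)
    (k C : ℝ) (hk : 2 / ε ≤ k) (hC : 0 < C)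
    (hnear : ∀ r : ℝ, |r| ≤ 1 → |h₂ r| ≤ C * |r| ^ k)
    (hdecay : ∀ N : ℕ, ∃ D : ℝ, ∀ r : ℝ, |h₂ r| * (1 + |r|) ^ N ≤ D) :
    ∃ (C' T₀ : ℝ), 0 < C' ∧ ∀ T ≥ T₀, ∀ θ : ℝ,
      T ^ (-1 + ε : ℝ) ≤ θ → θ ≤ Real.pi / 2 →
      |∫ r : ℝ, Real.cosh ((Real.pi - 2 * θ) * T * r) / Real.cosh (Real.pi * T * r) * h₂ r|
        ≤ C' / T ^ 2 :=
  stmt_12_general ε hε h₂ k C hk hC hnear hdecay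
end
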